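/- Let R be a graded unit-regular Γ-graded ring. Then every nonzero homogeneous component contains an invertible element: for every γ ∈ Γ with 𝒜 γ ≠ {0} there exists x ∈ 𝒜 γ which is a unit of R. -/
import Mathlib


/-- An element of `R` is homogeneous with respect to the grading `𝒜` if it lies in some
component `𝒜 γ`. -/
def IsHomogeneousElem {Γ R : Type*} [AddGroup Γ] [Ring R]
    (𝒜 : Γ → AddSubgroup R) (x : R) : Prop :=
  ∃ γ : Γ, x ∈ 𝒜 γ

/-- `R` is graded unit-regular: every homogeneous `x` admits homogeneous `u, v` with
`u*v = v*u = 1` and `x*u*x = x`. -/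
def GradedUnitRegular {Γ R : Type*} [AddGroup Γ] [Ring R]
    (𝒜 : Γ → AddSubgroup R) : Prop :=
  ∀ x : R, IsHomogeneousElem 𝒜 x →
    ∃ u v : R, IsHomogeneousElem 𝒜 u ∧ IsHomogeneousElem 𝒜 v ∧
      u * v = 1 ∧ v * u = 1 ∧ x * u * x = x

/-- If a `Γ`-graded ring `R` is graded unit-regular, then every nonzero homogeneous
component contains a unit of `R`. -/
theorem nonzero_component_contains_unit_of_gradedUnitRegular
    {Γ R : Type*} [AddGroup Γ] [DecidableEq Γ] [Ring R]
    (𝒜 : Γ → AddSubgroup R) [GradedRing 𝒜]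
    (h : GradedUnitRegular 𝒜) :
    ∀ γ : Γ, 𝒜 γ ≠ ⊥ → ∃ x ∈ 𝒜 γ, IsUnit x := by
  -- uniqueness of degree for nonzero homogeneous elements
  have uniq : ∀ {a b : Γ} {y : R}, y ≠ 0 → y ∈ 𝒜 a → y ∈ 𝒜 b → a = b := by
    intro a b y hy ha hb
    by_contra hab
    have h1 : ((DirectSum.decompose 𝒜 y) b : R) = 0 :=
      DirectSum.decompose_of_mem_ne 𝒜 ha hab
    have h2 : ((DirectSum.decompose 𝒜 y) b : R) = y :=
      DirectSum.decompose_of_mem_same 𝒜 hb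
    rw [h2] at h1
    exact hy h1
  intro γ hγ
  obtain ⟨x, hx, hx0⟩ : ∃ x ∈ 𝒜 γ, x ≠ 0 := by
    by_contra hc
    push_neg at hc
    refine hγ ?_
    ext z
    simp only [AddSubgroup.mem_bot]
    exact ⟨hc z, fun hz => hz ▸ (𝒜 γ).zero_mem⟩
  obtain ⟨u, v, ⟨δ, hu⟩, ⟨ε, hv⟩, huv, hvu, hxu⟩ := h x ⟨γ, hx⟩
  have hne : (1 : R) ≠ 0 := by
    intro h1
    apply hx0
    rw [← mul_one x, h1, mul_zero]
  have hmem : x * u * x ∈ 𝒜 (γ + δ + γ) :=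
    SetLike.mul_mem_graded (SetLike.mul_mem_graded hx hu) hx
  rw [hxu] at hmem
  have hδ : γ + δ + γ = γ := uniq hx0 hmem hx
  have hδ0 : γ + δ = 0 := by
    have h' : (γ + δ) + γ = 0 + γ := by rw [zero_add]; exact hδ
    exact add_right_cancel h'
  have hδ' : δ = -γ := (neg_eq_of_add_eq_zero_right hδ0).symm
  have h1mem : (1 : R) ∈ 𝒜 (δ + ε) := by
    rw [← huv]; exact SetLike.mul_mem_graded hu hv
  have hε : δ + ε = 0 := uniq hne h1mem (SetLike.one_mem_graded 𝒜)
  have hεγ : ε = γ := by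
    rw [hδ'] at hε
    exact (neg_add_eq_zero.mp hε).symm
  exact ⟨v, hεγ ▸ hv, ⟨⟨v, u, hvu, huv⟩, rfl⟩⟩
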